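/- arXiv:1608.03745 — 2 statements merged into one kernel-verified Lean document; each statement's English description precedes it below -/
import Mathlib

section
/- Jensen's inequality for the classical and Bayesian Cramér–Rao bounds: if c̄ is a random parameter with I(c̄) ≻ 0 almost surely and J = E_{c̄}[ −∇² ln f(c̄) ] + E_{c̄}[ I(c̄) ] with J ≻ 0 and the prior contribution E_{c̄}[ −∇² ln f(c̄) ] ⪰ 0, then tr(J^{-1}) ≤ E_{c̄}[ tr(I^{-1}(c̄)) ], i.e., the Bayesian CR bound is at most the expected classical CR bound. -/
open MeasureTheory Matrix

lemma psd_diag_nonneg {n : ℕ} {A : Matrix (Fin n) (Fin n) ℝ} (hA : A.PosSemidef)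
    (i : Fin n) : 0 ≤ A i i := by
  have := hA.dotProduct_mulVec_nonneg (Pi.single i 1)
  simpa [dotProduct, Matrix.mulVec, Pi.single_apply, Finset.sum_ite_eq'] using this

lemma psd_trace_nonneg {n : ℕ} {A : Matrix (Fin n) (Fin n) ℝ} (hA : A.PosSemidef) :
    0 ≤ A.trace := by
  rw [Matrix.trace]
  exact Finset.sum_nonneg fun i _ => psd_diag_nonneg hA i

/-- Pointwise key inequality: for posdef `A` and Hermitian (symmetric) `X`,
`2 tr X − tr (X A X) ≤ tr A⁻¹`. -/
lemma key_trace_ineq {n : ℕ} (A X : Matrix (Fin n) (Fin n) ℝ) (hA : A.PosDef)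
    (hX : X.IsHermitian) :
    2 * X.trace - (X * A * X).trace ≤ (A⁻¹).trace := by
  have hAinv : (A⁻¹).PosDef := hA.inv
  have hH : (X - A⁻¹)ᴴ = X - A⁻¹ := by
    rw [Matrix.conjTranspose_sub, hX.eq, hAinv.isHermitian.eq]
  have key : ((X - A⁻¹) * A * (X - A⁻¹)ᴴ).PosSemidef :=
    hA.posSemidef.mul_mul_conjTranspose_same _
  rw [hH] at key
  have hu : IsUnit A.det := by
    have := hA.det_pos; exact isUnit_iff_ne_zero.mpr (ne_of_gt this)
  have h1 : A * A⁻¹ = 1 := Matrix.mul_nonsing_inv A hu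
  have h2 : A⁻¹ * A = 1 := Matrix.nonsing_inv_mul A hu
  have expand : (X - A⁻¹) * A * (X - A⁻¹) = X * A * X - X - X + A⁻¹ := by
    have : A⁻¹ * A * A⁻¹ = A⁻¹ := by rw [h2, Matrix.one_mul]
    simp only [Matrix.sub_mul, Matrix.mul_sub]
    rw [Matrix.mul_assoc X A A⁻¹, h1, Matrix.mul_one, this, h2]
    noncomm_ring
  have htr := psd_trace_nonneg key
  rw [expand] at htr
  simp only [Matrix.trace_add, Matrix.trace_sub] at htr
  linarith

/-- Jensen's inequality for the classical and Bayesian Cramér–Rao bounds: with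
`J = E[−∇² ln f(c̄)] + E[I(c̄)]`, prior contribution positive semidefinite and `J ≻ 0`,
one has `tr(J⁻¹) ≤ E[tr(I⁻¹(c̄))]`. -/
theorem bayesian_cr_le_expected_classical_cr {Ω : Type*} [MeasurableSpace Ω]
    (μ : Measure Ω) [IsProbabilityMeasure μ] (n : ℕ)
    (Ic : Ω → Matrix (Fin n) (Fin n) ℝ) (P : Matrix (Fin n) (Fin n) ℝ)
    (hIc : ∀ᵐ ω ∂μ, (Ic ω).PosDef) (hP : P.PosSemidef)
    (hint : ∀ i j, Integrable (fun ω => Ic ω i j) μ)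
    (hint' : Integrable (fun ω => ((Ic ω)⁻¹).trace) μ)
    (J : Matrix (Fin n) (Fin n) ℝ)
    (hJ : J = P + Matrix.of fun i j => ∫ ω, Ic ω i j ∂μ)
    (hJpd : J.PosDef) :
    J⁻¹.trace ≤ ∫ ω, ((Ic ω)⁻¹).trace ∂μ := by
  set X := J⁻¹ with hXdef
  set E : Matrix (Fin n) (Fin n) ℝ := Matrix.of fun i j => ∫ ω, Ic ω i j ∂μ with hE
  have hXpd : X.PosDef := hJpd.inv
  have hXH : X.IsHermitian := hXpd.isHermitian
  -- trace of X * M * X as an explicit sum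
  have htr_expand : ∀ M : Matrix (Fin n) (Fin n) ℝ,
      (X * M * X).trace = ∑ i, ∑ j, ∑ k, X i k * M k j * X j i := by
    intro M
    simp only [Matrix.trace, Matrix.diag, Matrix.mul_apply, Finset.sum_mul]
  -- integrability of each summand
  have hint2 : ∀ i j k : Fin n,
      Integrable (fun ω => X i k * Ic ω k j * X j i) μ := by
    intro i j k
    simpa [mul_assoc, mul_comm, mul_left_comm] using ((hint k j).const_mul (X i k)).mul_const (X j i)
  have hintTr : Integrable (fun ω => (X * Ic ω * X).trace) μ := by
    have : (fun ω => (X * Ic ω * X).trace)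
        = fun ω => ∑ i, ∑ j, ∑ k, X i k * Ic ω k j * X j i := by
      funext ω; exact htr_expand _
    rw [this]
    exact integrable_finset_sum _ fun i _ => integrable_finset_sum _ fun j _ =>
      integrable_finset_sum _ fun k _ => hint2 i j k
  have hint_eq : ∫ ω, (X * Ic ω * X).trace ∂μ = (X * E * X).trace := by
    simp_rw [htr_expand]
    rw [integral_finset_sum _ fun i _ => integrable_finset_sum _ fun j _ =>
      integrable_finset_sum _ fun k _ => hint2 i j k]
    refine Finset.sum_congr rfl fun i _ => ?_
    rw [integral_finset_sum _ fun j _ => integrable_finset_sum _ fun k _ => hint2 i j k]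
    refine Finset.sum_congr rfl fun j _ => ?_
    rw [integral_finset_sum _ fun k _ => hint2 i j k]
    refine Finset.sum_congr rfl fun k _ => ?_
    rw [integral_mul_const, integral_const_mul]
    rfl
  -- pointwise bound, integrated
  have hmono : ∫ ω, (2 * X.trace - (X * Ic ω * X).trace) ∂μ
      ≤ ∫ ω, ((Ic ω)⁻¹).trace ∂μ := by
    refine integral_mono_ae ((integrable_const _).sub hintTr) hint' ?_
    filter_upwards [hIc] with ω hω
    exact key_trace_ineq (Ic ω) X hω hXH
  have hlhs : ∫ ω, (2 * X.trace - (X * Ic ω * X).trace) ∂μ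
      = 2 * X.trace - (X * E * X).trace := by
    rw [integral_sub (integrable_const _) hintTr, integral_const, hint_eq]
    simp
  rw [hlhs] at hmono
  -- Now show tr X ≤ 2 tr X - tr (X E X), i.e. tr (X E X) ≤ tr X.
  have hu : IsUnit J.det := isUnit_iff_ne_zero.mpr (ne_of_gt hJpd.det_pos)
  have hXJX : X * J * X = X := by
    rw [hXdef, Matrix.nonsing_inv_mul J hu, Matrix.one_mul]
  have hEeq : E = J - P := by rw [hJ]; exact (add_sub_cancel_left P E).symm
  have hXPX : (X * P * X).PosSemidef := by
    have := hP.mul_mul_conjTranspose_same X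
    rwa [hXH.eq] at this
  have htrXEX : (X * E * X).trace = X.trace - (X * P * X).trace := by
    rw [hEeq, Matrix.mul_sub, Matrix.sub_mul, Matrix.trace_sub, hXJX]
  have : (X * E * X).trace ≤ X.trace := by
    rw [htrXEX]
    have := psd_trace_nonneg hXPX
    linarith
  linarith
end

section
/- Consistency of least squares under a law of large numbers: let S_K ∈ ℝ^{m_K × n} denote the design matrix formed from a fixed periodic training sequence with m_K → ∞ observations, and let r_K be random vectors with independent Poisson components with means S_K c̄ for a fixed c̄ ≥ 0. If (1/m_K) S_Kᵀ S_K converges to an invertible matrix, then the least-squares estimator ĉ_K = (S_Kᵀ S_K)^{-1} S_Kᵀ r_K converges to c̄ in probability as K → ∞. -/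
open MeasureTheory ProbabilityTheory Matrix Filter
open scoped NNReal ENNReal

namespace LSSEAux

variable {Ω : Type*} [MeasurableSpace Ω] {μ : Measure Ω}

lemma ppr_succ (r : ℝ≥0) (n : ℕ) :
    (n + 1 : ℝ) * poissonPMFReal r (n + 1) = r * poissonPMFReal r n := by
  unfold poissonPMFReal
  rw [Nat.factorial_succ]
  push_cast
  have h : ((n:ℝ) + 1) ≠ 0 := by positivity
  field_simp
  ring

lemma summable_ppr (r : ℝ≥0) : Summable (poissonPMFReal r) :=
  (poissonPMFRealSum r).summable

lemma summable_id_ppr (r : ℝ≥0) : Summable (fun n : ℕ => (n : ℝ) * poissonPMFReal r n) := by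
  rw [← summable_nat_add_iff 1]
  simp only [Nat.cast_add, Nat.cast_one]
  exact (summable_ppr r).mul_left (r:ℝ) |>.congr fun n => (ppr_succ r n).symm

lemma tsum_id_ppr (r : ℝ≥0) : ∑' n : ℕ, (n : ℝ) * poissonPMFReal r n = r := by
  rw [Summable.tsum_eq_zero_add (summable_id_ppr r)]
  simp only [Nat.cast_zero, zero_mul, zero_add, Nat.cast_add, Nat.cast_one, ppr_succ]
  rw [tsum_mul_left, (show HasSum (poissonPMFReal r) 1 from poissonPMFRealSum r).tsum_eq, mul_one]


lemma g_succ2 (r : ℝ≥0) (n : ℕ) :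
    ((n+2 : ℕ) : ℝ) * (((n+2:ℕ) : ℝ) - 1) * poissonPMFReal r (n + 2)
      = (r:ℝ)^2 * poissonPMFReal r n := by
  push_cast
  have h1 : ((n:ℝ) + 2) * poissonPMFReal r (n + 2) = r * poissonPMFReal r (n+1) := by
    have := ppr_succ r (n+1); push_cast at this; convert this using 2 <;> ring
  have h2 := ppr_succ r n
  calc ((n:ℝ) + 2) * ((n:ℝ) + 2 - 1) * poissonPMFReal r (n + 2)
      = ((n:ℝ)+1) * (((n:ℝ) + 2) * poissonPMFReal r (n + 2)) := by ring
    _ = (r:ℝ) * (((n:ℝ)+1) * poissonPMFReal r (n+1)) := by rw [h1]; ring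
    _ = (r:ℝ)^2 * poissonPMFReal r n := by rw [h2]; ring

lemma summable_g (r : ℝ≥0) :
    Summable (fun n : ℕ => (n : ℝ) * ((n:ℝ) - 1) * poissonPMFReal r n) := by
  rw [← summable_nat_add_iff 2]
  exact ((summable_ppr r).mul_left ((r:ℝ)^2)).congr fun n => (g_succ2 r n).symm

lemma tsum_g (r : ℝ≥0) :
    ∑' n : ℕ, (n : ℝ) * ((n:ℝ) - 1) * poissonPMFReal r n = (r:ℝ)^2 := by
  have hs := summable_g r
  rw [Summable.tsum_eq_zero_add hs]
  have hs1 : Summable (fun n : ℕ => ((n+1 : ℕ) : ℝ) * (((n+1:ℕ):ℝ) - 1) * poissonPMFReal r (n+1)) := by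
    exact (summable_nat_add_iff 1).mpr hs
  rw [Summable.tsum_eq_zero_add hs1]
  simp only [Nat.cast_zero, Nat.cast_add, Nat.cast_one, Nat.cast_ofNat]
  have : ∀ n : ℕ, ((n:ℝ) + 1 + 1) * ((n:ℝ) + 1 + 1 - 1) * poissonPMFReal r (n + 1 + 1)
      = (r:ℝ)^2 * poissonPMFReal r n := by
    intro n; have := g_succ2 r n; push_cast at this; convert this using 2 <;> ring_nf
  rw [tsum_congr this, tsum_mul_left, (show HasSum (poissonPMFReal r) 1 from poissonPMFRealSum r).tsum_eq]
  ring

lemma summable_sq_ppr (r : ℝ≥0) :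
    Summable (fun n : ℕ => (n : ℝ)^2 * poissonPMFReal r n) := by
  have := (summable_g r).add (summable_id_ppr r)
  exact this.congr fun n => by ring

lemma tsum_sq_ppr (r : ℝ≥0) :
    ∑' n : ℕ, (n : ℝ)^2 * poissonPMFReal r n = (r:ℝ)^2 + r := by
  have : (fun n : ℕ => (n : ℝ)^2 * poissonPMFReal r n)
      = fun n : ℕ => (n : ℝ) * ((n:ℝ) - 1) * poissonPMFReal r n + (n : ℝ) * poissonPMFReal r n := by
    funext n; ring
  rw [this, Summable.tsum_add (summable_g r) (summable_id_ppr r), tsum_g, tsum_id_ppr]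

lemma poisson_singleton (r : ℝ≥0) (n : ℕ) :
    poissonMeasure r {n} = ENNReal.ofReal (poissonPMFReal r n) :=
  by rw [poissonMeasure_singleton]; rfl

lemma integrable_of_summable (r : ℝ≥0) (f : ℕ → ℝ) (hnn : ∀ n, 0 ≤ f n)
    (hs : Summable (fun n => f n * poissonPMFReal r n)) :
    Integrable f (poissonMeasure r) := by
  refine ⟨(measurable_from_nat).aestronglyMeasurable, ?_⟩
  rw [hasFiniteIntegral_iff_norm, lintegral_countable']
  have heq : ∀ n : ℕ, ENNReal.ofReal ‖f n‖ * poissonMeasure r {n}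
      = ENNReal.ofReal (f n * poissonPMFReal r n) := by
    intro n
    rw [poisson_singleton, ← ENNReal.ofReal_mul (norm_nonneg _),
      Real.norm_of_nonneg (hnn n)]
  rw [tsum_congr heq, ← ENNReal.ofReal_tsum_of_nonneg
    (fun n => mul_nonneg (hnn n) poissonPMFReal_nonneg) hs]
  exact ENNReal.ofReal_lt_top

lemma integral_poisson_of_summable (r : ℝ≥0) (f : ℕ → ℝ) (hnn : ∀ n, 0 ≤ f n)
    (hs : Summable (fun n => f n * poissonPMFReal r n)) :
    ∫ n, f n ∂(poissonMeasure r) = ∑' n : ℕ, f n * poissonPMFReal r n := by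
  rw [integral_countable (integrable_of_summable r f hnn hs)]
  congr 1; funext n
  rw [measureReal_def, poisson_singleton, smul_eq_mul,
    ENNReal.toReal_ofReal poissonPMFReal_nonneg, mul_comm]

lemma integrable_id_poisson (r : ℝ≥0) :
    Integrable (fun n : ℕ => (n : ℝ)) (poissonMeasure r) :=
  integrable_of_summable r _ (fun n => Nat.cast_nonneg n) (summable_id_ppr r)

lemma integral_id_poisson (r : ℝ≥0) : ∫ n, (n : ℝ) ∂(poissonMeasure r) = r := by
  rw [integral_poisson_of_summable r _ (fun n => Nat.cast_nonneg n) (summable_id_ppr r),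
    tsum_id_ppr]

lemma integrable_sq_poisson (r : ℝ≥0) :
    Integrable (fun n : ℕ => (n : ℝ)^2) (poissonMeasure r) :=
  integrable_of_summable r _ (fun n => sq_nonneg _) (summable_sq_ppr r)

lemma integral_sq_poisson (r : ℝ≥0) :
    ∫ n, (n : ℝ)^2 ∂(poissonMeasure r) = (r:ℝ)^2 + r := by
  rw [integral_poisson_of_summable r _ (fun n => sq_nonneg _) (summable_sq_ppr r), tsum_sq_ppr]

lemma memLp_cast_poisson (r : ℝ≥0) :
    MemLp (fun n : ℕ => (n : ℝ)) 2 (poissonMeasure r) := by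
  rw [memLp_two_iff_integrable_sq (measurable_from_nat).aestronglyMeasurable]
  exact integrable_sq_poisson r

variable {Ω : Type*} [MeasurableSpace Ω] {μ : Measure Ω} [IsProbabilityMeasure μ]

lemma rv_memLp {f : Ω → ℕ} (hf : Measurable f) {lam : ℝ≥0}
    (hd : Measure.map f μ = poissonMeasure lam) :
    MemLp (fun ω => (f ω : ℝ)) 2 μ := by
  have h := (memLp_map_measure_iff (μ := μ) (g := fun n : ℕ => (n:ℝ)) (p := 2)
      (measurable_from_nat).aestronglyMeasurable hf.aemeasurable).mp
  rw [hd] at h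
  exact h (memLp_cast_poisson lam)

lemma rv_integral {f : Ω → ℕ} (hf : Measurable f) {lam : ℝ≥0}
    (hd : Measure.map f μ = poissonMeasure lam) :
    ∫ ω, (f ω : ℝ) ∂μ = lam := by
  have h := integral_map (f := fun n : ℕ => (n:ℝ)) hf.aemeasurable
    (by rw [hd]; exact (measurable_from_nat).aestronglyMeasurable)
  rw [hd, integral_id_poisson] at h
  exact h.symm

lemma rv_variance {f : Ω → ℕ} (hf : Measurable f) {lam : ℝ≥0}
    (hd : Measure.map f μ = poissonMeasure lam) :
    variance (fun ω => (f ω : ℝ)) μ = lam := by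
  rw [variance_eq_sub (rv_memLp hf hd)]
  have hsq : ∫ ω, (f ω : ℝ)^2 ∂μ = (lam:ℝ)^2 + lam := by
    have h := integral_map (f := fun n : ℕ => (n:ℝ)^2) hf.aemeasurable
      (by rw [hd]; exact ((measurable_from_nat).pow_const 2).aestronglyMeasurable)
    rw [hd, integral_sq_poisson] at h
    exact h.symm
  have h1 : (fun ω => (f ω : ℝ)) ^ 2 = fun ω => (f ω : ℝ)^2 := rfl
  rw [h1, hsq, rv_integral hf hd]
  ring

variable {Ω : Type*} [MeasurableSpace Ω] {μ : Measure Ω} [IsProbabilityMeasure μ]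

variable {m : ℕ} {r : Ω → Fin m → ℕ} {lam : Fin m → ℝ≥0} {b : Fin m → ℝ}

lemma wsum_memLp (hmeas : ∀ i, Measurable fun ω => r ω i)
    (hdist : ∀ i, Measure.map (fun ω => r ω i) μ = poissonMeasure (lam i)) :
    MemLp (fun ω => ∑ i, b i * (r ω i : ℝ)) 2 μ := by
  have hfe : (fun ω => ∑ i, b i * (r ω i : ℝ))
      = ∑ i, (fun ω => b i * (r ω i : ℝ)) := by
    funext ω; simp
  rw [hfe]
  exact memLp_finset_sum' _ fun i _ => (rv_memLp (hmeas i) (hdist i)).const_mul (b i)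

lemma wsum_integral (hmeas : ∀ i, Measurable fun ω => r ω i)
    (hdist : ∀ i, Measure.map (fun ω => r ω i) μ = poissonMeasure (lam i)) :
    ∫ ω, (∑ i, b i * (r ω i : ℝ)) ∂μ = ∑ i, b i * (lam i : ℝ) := by
  rw [integral_finset_sum _ fun i _ =>
    ((rv_memLp (hmeas i) (hdist i)).integrable one_le_two).const_mul (b i)]
  exact Finset.sum_congr rfl fun i _ => by
    rw [integral_const_mul, rv_integral (hmeas i) (hdist i)]

lemma wsum_variance (hmeas : ∀ i, Measurable fun ω => r ω i)
    (hindep : iIndepFun (fun i ω => r ω i) μ)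
    (hdist : ∀ i, Measure.map (fun ω => r ω i) μ = poissonMeasure (lam i)) :
    variance (fun ω => ∑ i, b i * (r ω i : ℝ)) μ = ∑ i, (b i)^2 * (lam i : ℝ) := by
  have hfe : (fun ω => ∑ i, b i * (r ω i : ℝ))
      = ∑ i, (fun ω => b i * (r ω i : ℝ)) := by
    funext ω; simp
  rw [hfe, IndepFun.variance_sum
    (fun i _ => (rv_memLp (hmeas i) (hdist i)).const_mul (b i))
    (fun i _ j _ hij => by
      have h := (hindep.indepFun hij).comp
        (φ := fun x : ℕ => b i * (x:ℝ)) (ψ := fun x : ℕ => b j * (x:ℝ))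
        (measurable_from_nat (mα := Real.measurableSpace)) (measurable_from_nat (mα := Real.measurableSpace))
      exact h)]
  exact Finset.sum_congr rfl fun i _ => by
    rw [variance_const_mul, rv_variance (hmeas i) (hdist i)]

lemma wsum_chebyshev (hmeas : ∀ i, Measurable fun ω => r ω i)
    (hindep : iIndepFun (fun i ω => r ω i) μ)
    (hdist : ∀ i, Measure.map (fun ω => r ω i) μ = poissonMeasure (lam i))
    {δ : ℝ} (hδ : 0 < δ) :
    μ {ω | δ ≤ |(∑ i, b i * (r ω i : ℝ)) - ∑ i, b i * (lam i : ℝ)|}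
      ≤ ENNReal.ofReal ((∑ i, (b i)^2 * (lam i : ℝ)) / δ^2) := by
  have h := meas_ge_le_variance_div_sq (μ := μ)
    (X := fun ω => ∑ i, b i * (r ω i : ℝ)) (wsum_memLp hmeas hdist) hδ
  rw [wsum_variance hmeas hindep hdist] at h
  have he : ∫ ω, (∑ i, b i * (r ω i : ℝ)) ∂μ = ∑ i, b i * (lam i : ℝ) :=
    wsum_integral hmeas hdist
  convert h using 3
  rw [he]

variable {Ω : Type*} [MeasurableSpace Ω] {μ : Measure Ω} [IsProbabilityMeasure μ]

theorem key_bound {m n : ℕ} (hm1 : 1 ≤ m) (hn : 0 < n)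
    (S : Matrix (Fin m) (Fin n) ℝ) (hSbd : ∀ i j, S i j ∈ Set.Icc (0:ℝ) 1)
    (cbar : Fin n → ℝ) (hcb : ∀ j, 0 ≤ cbar j)
    (r : Ω → Fin m → ℕ) (hmeas : ∀ i, Measurable fun ω => r ω i)
    (hindep : iIndepFun (fun i ω => r ω i) μ)
    (hdist : ∀ i, Measure.map (fun ω => r ω i) μ
      = poissonMeasure (Real.toNNReal (S.mulVec cbar i)))
    (hinv : IsUnit (Sᵀ * S))
    {C ε : ℝ} (hC : 0 < C) (hB : ∀ j k, |((m:ℝ) • (Sᵀ * S)⁻¹) j k| ≤ C)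
    (hε : 0 < ε) :
    μ {ω | ε ≤ dist ((((Sᵀ * S)⁻¹ * Sᵀ).mulVec fun i => (r ω i : ℝ)) ) cbar}
      ≤ (n : ℝ≥0∞) * ENNReal.ofReal
          ((m:ℝ)⁻¹ * (∑ j, cbar j) / (ε / (n * C))^2) := by
  have hmpos : (0:ℝ) < m := by exact_mod_cast hm1
  have hmne : (m:ℝ) ≠ 0 := ne_of_gt hmpos
  set Λ : ℝ := ∑ j, cbar j with hΛdef
  have hΛ0 : 0 ≤ Λ := Finset.sum_nonneg fun j _ => hcb j
  -- the Poisson rates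
  set lam : Fin m → ℝ≥0 := fun i => Real.toNNReal (S.mulVec cbar i) with hlamdef
  have hmv : ∀ i, S.mulVec cbar i = ∑ j, S i j * cbar j := by
    intro i; simp [Matrix.mulVec, dotProduct]
  have hlam0 : ∀ i, 0 ≤ S.mulVec cbar i := by
    intro i; rw [hmv]
    exact Finset.sum_nonneg fun j _ => mul_nonneg (hSbd i j).1 (hcb j)
  have hlamR : ∀ i, (lam i : ℝ) = S.mulVec cbar i := fun i =>
    Real.coe_toNNReal _ (hlam0 i)
  have hlamΛ : ∀ i, (lam i : ℝ) ≤ Λ := by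
    intro i; rw [hlamR, hmv]
    exact Finset.sum_le_sum fun j _ => by
      nlinarith [(hSbd i j).1, (hSbd i j).2, hcb j]
  -- coefficients
  set b : Fin n → Fin m → ℝ := fun k i => (m:ℝ)⁻¹ * S i k with hbdef
  set δ : ℝ := ε / (n * C) with hδdef
  have hnC : (0:ℝ) < n * C := by positivity
  have hδ : 0 < δ := div_pos hε hnC
  -- key algebraic identity
  have hdet : IsUnit (Sᵀ * S).det := (Matrix.isUnit_iff_isUnit_det _).mp hinv
  have hTinv : (Sᵀ * S)⁻¹ * (Sᵀ * S) = 1 := Matrix.nonsing_inv_mul _ hdet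
  have hcb2 : ((Sᵀ * S)⁻¹ * Sᵀ).mulVec (S.mulVec cbar) = cbar := by
    rw [Matrix.mulVec_mulVec, Matrix.mul_assoc, hTinv, Matrix.one_mulVec]
  have key : ∀ ω (j : Fin n),
      (((Sᵀ * S)⁻¹ * Sᵀ).mulVec fun i => (r ω i : ℝ)) j - cbar j
      = ∑ k, ((m:ℝ) • (Sᵀ * S)⁻¹) j k *
          ((∑ i, b k i * (r ω i : ℝ)) - ∑ i, b k i * (lam i : ℝ)) := by
    intro ω j
    have hW : ∀ k : Fin n, (∑ i, b k i * (r ω i : ℝ)) - ∑ i, b k i * (lam i : ℝ)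
        = (m:ℝ)⁻¹ * ∑ i, S i k * ((r ω i : ℝ) - (lam i : ℝ)) := by
      intro k
      rw [← Finset.sum_sub_distrib, Finset.mul_sum]
      exact Finset.sum_congr rfl fun i _ => by simp only [hbdef]; ring
    calc (((Sᵀ * S)⁻¹ * Sᵀ).mulVec fun i => (r ω i : ℝ)) j - cbar j
        = (((Sᵀ * S)⁻¹ * Sᵀ).mulVec
            ((fun i => (r ω i : ℝ)) - S.mulVec cbar)) j := by
          rw [Matrix.mulVec_sub]
          simp [hcb2]
      _ = ∑ k, (Sᵀ * S)⁻¹ j k * ∑ i, S i k * ((r ω i : ℝ) - (lam i : ℝ)) := by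
          rw [← Matrix.mulVec_mulVec]
          simp only [Matrix.mulVec, dotProduct, Matrix.transpose_apply, Pi.sub_apply]
          exact Finset.sum_congr rfl fun k _ => by
            congr 1
            exact Finset.sum_congr rfl fun i _ => by rw [hlamR i, hmv i]
      _ = _ := by
          refine Finset.sum_congr rfl fun k _ => ?_
          rw [hW k, Matrix.smul_apply, smul_eq_mul]
          field_simp
  -- set inclusion
  have hincl : {ω | ε ≤ dist ((((Sᵀ * S)⁻¹ * Sᵀ).mulVec fun i => (r ω i : ℝ))) cbar}
      ⊆ ⋃ k : Fin n, {ω | δ ≤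
          |(∑ i, b k i * (r ω i : ℝ)) - ∑ i, b k i * (lam i : ℝ)|} := by
    intro ω hω
    simp only [Set.mem_setOf_eq] at hω
    have hnotall : ¬ ∀ j, dist ((((Sᵀ * S)⁻¹ * Sᵀ).mulVec fun i => (r ω i : ℝ)) j)
        (cbar j) < ε := by
      intro hall
      exact absurd ((dist_pi_lt_iff hε).mpr hall) (not_lt.2 hω)
    push_neg at hnotall
    obtain ⟨j, hj⟩ := hnotall
    rw [Real.dist_eq] at hj
    by_contra hco
    simp only [Set.mem_iUnion, Set.mem_setOf_eq, not_exists, not_le] at hco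
    have hlt : |(((Sᵀ * S)⁻¹ * Sᵀ).mulVec fun i => (r ω i : ℝ)) j - cbar j| < ε := by
      rw [key ω j]
      calc |∑ k, ((m:ℝ) • (Sᵀ * S)⁻¹) j k *
              ((∑ i, b k i * (r ω i : ℝ)) - ∑ i, b k i * (lam i : ℝ))|
          ≤ ∑ k, |((m:ℝ) • (Sᵀ * S)⁻¹) j k *
              ((∑ i, b k i * (r ω i : ℝ)) - ∑ i, b k i * (lam i : ℝ))| :=
            Finset.abs_sum_le_sum_abs _ _
        _ < ∑ _k : Fin n, C * δ := by
            refine Finset.sum_lt_sum_of_nonempty ⟨⟨0, hn⟩, Finset.mem_univ _⟩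
              fun k _ => ?_
            rw [abs_mul]
            exact mul_lt_mul' (hB j k) (hco k) (abs_nonneg _) hC
        _ = ε := by
            rw [Finset.sum_const, Finset.card_univ, Fintype.card_fin, nsmul_eq_mul,
              hδdef]
            field_simp
    exact absurd hj (not_le.2 hlt)
  -- variance bound per k
  have hvar : ∀ k : Fin n, (∑ i, (b k i)^2 * (lam i : ℝ)) ≤ (m:ℝ)⁻¹ * Λ := by
    intro k
    have h1 : ∀ i, (b k i)^2 * (lam i : ℝ) ≤ ((m:ℝ)⁻¹)^2 * Λ := by
      intro i
      have hb1 : (b k i)^2 ≤ ((m:ℝ)⁻¹)^2 := by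
        have h0 : 0 ≤ b k i := mul_nonneg (by positivity) (hSbd i k).1
        have h2 : b k i ≤ (m:ℝ)⁻¹ := by
          simp only [hbdef]
          nlinarith [(hSbd i k).2, inv_pos.mpr hmpos]
        nlinarith
      nlinarith [hlamΛ i, (lam i).coe_nonneg, sq_nonneg (b k i), hΛ0]
    calc (∑ i, (b k i)^2 * (lam i : ℝ)) ≤ ∑ _i : Fin m, ((m:ℝ)⁻¹)^2 * Λ :=
          Finset.sum_le_sum fun i _ => h1 i
      _ = (m:ℝ) * (((m:ℝ)⁻¹)^2 * Λ) := by
          rw [Finset.sum_const, Finset.card_univ, Fintype.card_fin, nsmul_eq_mul]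
      _ = (m:ℝ)⁻¹ * Λ := by field_simp
  -- measure bound
  calc μ {ω | ε ≤ dist ((((Sᵀ * S)⁻¹ * Sᵀ).mulVec fun i => (r ω i : ℝ))) cbar}
      ≤ μ (⋃ k : Fin n, {ω | δ ≤
          |(∑ i, b k i * (r ω i : ℝ)) - ∑ i, b k i * (lam i : ℝ)|}) :=
        measure_mono hincl
    _ ≤ ∑' k : Fin n, μ {ω | δ ≤
          |(∑ i, b k i * (r ω i : ℝ)) - ∑ i, b k i * (lam i : ℝ)|} :=
        measure_iUnion_le _
    _ = ∑ k : Fin n, μ {ω | δ ≤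
          |(∑ i, b k i * (r ω i : ℝ)) - ∑ i, b k i * (lam i : ℝ)|} := tsum_fintype _
    _ ≤ ∑ _k : Fin n, ENNReal.ofReal ((m:ℝ)⁻¹ * Λ / δ^2) := by
        refine Finset.sum_le_sum fun k _ => ?_
        refine le_trans (wsum_chebyshev hmeas hindep hdist hδ) ?_
        exact ENNReal.ofReal_le_ofReal (by gcongr; exact hvar k)
    _ = (n : ℝ≥0∞) * ENNReal.ofReal ((m:ℝ)⁻¹ * Λ / δ^2) := by
        rw [Finset.sum_const, Finset.card_univ, Fintype.card_fin, nsmul_eq_mul]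
    _ = _ := by rw [hδdef]

end LSSEAux

/-- Consistency of the least-squares estimator: with independent Poisson observations
with means `S_K c̄`, entries of `S_K` in `[0,1]`, and `(1/m_K) S_Kᵀ S_K` converging to an
invertible matrix, the estimator `(S_Kᵀ S_K)⁻¹ S_Kᵀ r_K` converges to `c̄` in probability. -/
theorem lsse_consistent {Ω : Type*} [MeasurableSpace Ω] (μ : Measure Ω)
    [IsProbabilityMeasure μ] (n : ℕ) (mK : ℕ → ℕ)
    (hm : Tendsto mK atTop atTop)
    (S : ∀ K, Matrix (Fin (mK K)) (Fin n) ℝ)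
    (hSbd : ∀ K i j, S K i j ∈ Set.Icc (0 : ℝ) 1)
    (cbar : Fin n → ℝ) (hcb : ∀ j, 0 ≤ cbar j)
    (r : ∀ K : ℕ, Ω → Fin (mK K) → ℕ)
    (hmeas : ∀ K i, Measurable fun ω => r K ω i)
    (hindep : ∀ K, iIndepFun (fun i ω => r K ω i) μ)
    (hdist : ∀ K i, Measure.map (fun ω => r K ω i) μ
        = poissonMeasure (Real.toNNReal ((S K).mulVec cbar i)))
    (M : Matrix (Fin n) (Fin n) ℝ) (hM : IsUnit M)
    (hconv : ∀ i j, Tendsto (fun K => ((mK K : ℝ))⁻¹ * (((S K)ᵀ * S K) i j))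
        atTop (nhds (M i j)))
    (hinvK : ∀ K, IsUnit ((S K)ᵀ * S K)) :
    ∀ ε > (0 : ℝ), Tendsto
      (fun K => μ {ω | ε ≤ dist
          ((((S K)ᵀ * S K)⁻¹ * (S K)ᵀ).mulVec fun i => (r K ω i : ℝ)) cbar})
      atTop (nhds 0) := by
  
  intro ε hε
  rcases Nat.eq_zero_or_pos n with hn | hn
  · -- degenerate case n = 0
    subst hn
    have hempty : ∀ K, {ω : Ω | ε ≤ dist
        ((((S K)ᵀ * S K)⁻¹ * (S K)ᵀ).mulVec fun i => (r K ω i : ℝ)) cbar} = ∅ := by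
      intro K
      ext ω
      simp only [Set.mem_setOf_eq, Set.mem_empty_iff_false, iff_false, not_le]
      have : (((S K)ᵀ * S K)⁻¹ * (S K)ᵀ).mulVec (fun i => (r K ω i : ℝ)) = cbar := by
        funext j; exact j.elim0
      rw [this, dist_self]; exact hε
    simp only [hempty, measure_empty]
    exact tendsto_const_nhds
  -- main case
  -- entrywise convergence of B K := mK K • (SᵀS)⁻¹ to M⁻¹
  have hdetM : M.det ≠ 0 := ((Matrix.isUnit_iff_isUnit_det M).mp hM).ne_zero
  have hA : Tendsto (fun K => (mK K : ℝ)⁻¹ • ((S K)ᵀ * S K)) atTop (nhds M) := by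
    refine tendsto_pi_nhds.mpr fun i => ?_
    refine tendsto_pi_nhds.mpr fun j => ?_
    simpa [Matrix.smul_apply, smul_eq_mul] using hconv i j
  have hdet : Tendsto (fun K => ((mK K : ℝ)⁻¹ • ((S K)ᵀ * S K)).det) atTop
      (nhds M.det) := ((Continuous.matrix_det continuous_id).tendsto M).comp hA
  have hadj : ∀ i j, Tendsto
      (fun K => ((mK K : ℝ)⁻¹ • ((S K)ᵀ * S K)).adjugate i j) atTop
      (nhds (M.adjugate i j)) := by
    intro i j
    have hc : Continuous fun A : Matrix (Fin n) (Fin n) ℝ => A.adjugate i j :=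
      ((continuous_apply j).comp (continuous_apply i)).comp
        (Continuous.matrix_adjugate continuous_id)
    exact (hc.tendsto M).comp hA
  have hAinv : ∀ i j, Tendsto (fun K => ((mK K : ℝ)⁻¹ • ((S K)ᵀ * S K))⁻¹ i j)
      atTop (nhds (M⁻¹ i j)) := by
    intro i j
    have h1 : ∀ K, ((mK K : ℝ)⁻¹ • ((S K)ᵀ * S K))⁻¹ i j
        = ((mK K : ℝ)⁻¹ • ((S K)ᵀ * S K)).det⁻¹
            * ((mK K : ℝ)⁻¹ • ((S K)ᵀ * S K)).adjugate i j := by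
      intro K
      rw [Matrix.inv_def, Matrix.smul_apply, smul_eq_mul, Ring.inverse_eq_inv']
    have h2 : M⁻¹ i j = M.det⁻¹ * M.adjugate i j := by
      rw [Matrix.inv_def, Matrix.smul_apply, smul_eq_mul, Ring.inverse_eq_inv']
    simp only [h1, h2]
    exact (hdet.inv₀ hdetM).mul (hadj i j)
  have hBA : ∀ᶠ K in atTop, ∀ i j,
      ((mK K : ℝ) • ((S K)ᵀ * S K)⁻¹) i j = ((mK K : ℝ)⁻¹ • ((S K)ᵀ * S K))⁻¹ i j := by
    filter_upwards [hm.eventually_ge_atTop 1] with K hK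
    have hmne : (mK K : ℝ) ≠ 0 := by
      have : (0:ℝ) < mK K := by exact_mod_cast hK
      exact ne_of_gt this
    have hmul : ((mK K : ℝ)⁻¹ • ((S K)ᵀ * S K)) * ((mK K : ℝ) • ((S K)ᵀ * S K)⁻¹) = 1 := by
      rw [Matrix.smul_mul, Matrix.mul_smul, smul_smul, inv_mul_cancel₀ hmne,
        Matrix.mul_nonsing_inv _ ((Matrix.isUnit_iff_isUnit_det _).mp (hinvK K)), one_smul]
    intro i j
    rw [Matrix.inv_eq_right_inv hmul]
  have hB : ∀ i j, Tendsto (fun K => ((mK K : ℝ) • ((S K)ᵀ * S K)⁻¹) i j) atTop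
      (nhds (M⁻¹ i j)) := by
    intro i j
    exact (hAinv i j).congr' (hBA.mono fun K h => (h i j).symm)
  -- uniform bound C
  set C : ℝ := 1 + ∑ i, ∑ j, |M⁻¹ i j| with hCdef
  have hC : 0 < C := by rw [hCdef]; positivity
  have hCb : ∀ i j, |M⁻¹ i j| < C := by
    intro i j
    have h1 : |M⁻¹ i j| ≤ ∑ j', |M⁻¹ i j'| :=
      Finset.single_le_sum (f := fun j' => |M⁻¹ i j'|) (fun j' _ => abs_nonneg _)
        (Finset.mem_univ j)
    have h2 : (∑ j', |M⁻¹ i j'|) ≤ ∑ i', ∑ j', |M⁻¹ i' j'| :=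
      Finset.single_le_sum (f := fun i' => ∑ j', |M⁻¹ i' j'|)
        (fun i' _ => Finset.sum_nonneg fun j' _ => abs_nonneg _) (Finset.mem_univ i)
    rw [hCdef]; linarith
  have hBbd : ∀ᶠ K in atTop, ∀ i j, |((mK K : ℝ) • ((S K)ᵀ * S K)⁻¹) i j| ≤ C := by
    rw [eventually_all]
    intro i
    rw [eventually_all]
    intro j
    exact (((hB i j).abs).eventually_lt_const (hCb i j)).mono fun K h => le_of_lt h
  -- squeeze
  set δ : ℝ := ε / (n * C) with hδdef
  have hδ : 0 < δ := div_pos hε (by positivity)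
  have hreal : Tendsto (fun K => (mK K : ℝ)⁻¹ * (∑ j, cbar j) / δ^2) atTop (nhds 0) := by
    have h1 : Tendsto (fun K => ((mK K : ℕ) : ℝ)) atTop atTop :=
      tendsto_natCast_atTop_atTop.comp hm
    have h2 : Tendsto (fun K => ((mK K : ℕ) : ℝ)⁻¹) atTop (nhds 0) :=
      h1.inv_tendsto_atTop
    have := (h2.mul_const (∑ j, cbar j)).div_const (δ^2)
    simpa using this
  have hg : Tendsto (fun K => (n : ℝ≥0∞) * ENNReal.ofReal
      ((mK K : ℝ)⁻¹ * (∑ j, cbar j) / δ^2)) atTop (nhds 0) := by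
    have h3 : Tendsto (fun K => ENNReal.ofReal ((mK K : ℝ)⁻¹ * (∑ j, cbar j) / δ^2))
        atTop (nhds 0) := by
      have := (ENNReal.continuous_ofReal.tendsto 0).comp hreal
      simpa [Function.comp_def] using this
    have h4 := ENNReal.Tendsto.const_mul (a := (n : ℝ≥0∞)) h3
      (Or.inr (ENNReal.natCast_ne_top n))
    simpa using h4
  refine tendsto_of_tendsto_of_tendsto_of_le_of_le' tendsto_const_nhds hg
    (Eventually.of_forall fun K => zero_le) ?_
  filter_upwards [hm.eventually_ge_atTop 1, hBbd] with K hK1 hKB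
  have h := LSSEAux.key_bound (μ := μ) hK1 hn (S K) (hSbd K) cbar hcb (r K)
    (hmeas K) (hindep K) (hdist K) (hinvK K) hC hKB hε
  rw [hδdef]
  exact h
end
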